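/- arXiv:math/0507463 — 2 statements merged into one kernel-verified Lean document; each statement's English description precedes it below -/
import Mathlib

section
/- Let K be a compact convex set in ℝ² containing the origin in its interior and contained in the closed unit disk 𝔻, and suppose K contains the disk D(0, ρ) for some 0 < ρ < 1. Let G(x₀) = D(x₀/2, 1/2) with x₀ = (1,0), and let μ be the measure on the punctured unit disk with polar density ρ⁻³. Then μ(𝔻 \ K) − μ(𝔻 \ (K ∪ G(x₀))) = μ(G(x₀) \ K) ≤ μ(G(x₀) \ D(0, ρ)) ≤ C (1 − ρ)^{3/2} for an absolute constant C, uniformly for ρ ≥ 1/2. -/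
/-!
Splitting `𝔻 \ K` along the measurable disk `G(x₀) ⊆ 𝔻` gives the identity, and `D(0, ρ) ⊆ K`
gives the monotonicity. For the estimate: `G(x₀)` is the disk `‖x‖² ≤ x₀`, so its part outside
`D(0, ρ)` lies in the box `[ρ², 1] × [-√(1 - ρ²), √(1 - ρ²)]`, of area
`2 (1 - ρ²)^{3/2} ≤ 8 (1 - ρ)^{3/2}`, on which the density `‖x‖⁻⁴` is at most `ρ⁻⁴ ≤ 16`.
-/

open MeasureTheory Metric

/-- The measure with polar density `ρ⁻³` on the punctured unit disk, i.e. with density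
`‖x‖⁻⁴` with respect to planar Lebesgue measure on the punctured disk. -/
noncomputable def muPolarCubed : Measure (EuclideanSpace ℝ (Fin 2)) :=
  (volume.restrict {x : EuclideanSpace ℝ (Fin 2) | 0 < ‖x‖ ∧ ‖x‖ ≤ 1}).withDensity
    fun x => ENNReal.ofReal (‖x‖ ^ 4)⁻¹

/-- The disk with diameter `[0, x₀]`, `x₀ = (1,0)`. -/
noncomputable def grainX0 : Set (EuclideanSpace ℝ (Fin 2)) :=
  closedBall ((1 / 2 : ℝ) • EuclideanSpace.single 0 1) (1 / 2)

open Set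

theorem measure_diff_sub_measure_diff_union {α : Type*} [MeasurableSpace α] (μ : Measure α)
    {B K G : Set α} (hG : MeasurableSet G) (hGB : G ⊆ B) (hfin : μ (B \ (K ∪ G)) ≠ ⊤) :
    μ (B \ K) - μ (B \ (K ∪ G)) = μ (G \ K) := by
  have hsplit := measure_inter_add_sdiff (μ := μ) (B \ K) hG
  rw [sdiff_sdiff] at hsplit
  rw [← hsplit, ENNReal.add_sub_cancel_right hfin, inter_comm, ← inter_sdiff_assoc,
    inter_eq_left.2 hGB]

theorem mem_closedBall_half_smul_iff {E : Type*} [NormedAddCommGroup E] [InnerProductSpace ℝ E]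
    (e x : E) : x ∈ closedBall ((1 / 2 : ℝ) • e) (‖e‖ / 2) ↔ ‖x‖ ^ 2 ≤ inner ℝ x e := by
  rw [mem_closedBall, dist_eq_norm, ← sq_le_sq₀ (norm_nonneg _) (by positivity),
    norm_sub_sq_real, norm_smul, inner_smul_right]
  norm_num
  constructor <;> intro h <;> linarith

theorem mem_grainX0_iff (x : EuclideanSpace ℝ (Fin 2)) : x ∈ grainX0 ↔ ‖x‖ ^ 2 ≤ x 0 := by
  have := mem_closedBall_half_smul_iff (EuclideanSpace.single (0 : Fin 2) (1 : ℝ)) x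
  rwa [PiLp.norm_single, norm_one, EuclideanSpace.inner_single_right, conj_trivial, one_mul] at this

theorem grainX0_subset_closedBall : grainX0 ⊆ closedBall 0 1 :=
  closedBall_subset_closedBall' <| by norm_num [norm_smul]

theorem grainX0_diff_closedBall_subset {ρ : ℝ} (hρ : 0 ≤ ρ) :
    grainX0 \ closedBall 0 ρ ⊆
      WithLp.ofLp ⁻¹' Icc ![ρ ^ 2, -√(1 - ρ ^ 2)] ![1, √(1 - ρ ^ 2)] := by
  rintro x ⟨hG, hB⟩
  rw [mem_grainX0_iff] at hG
  have hnorm : ‖x‖ ^ 2 = x 0 ^ 2 + x 1 ^ 2 := by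
    rw [EuclideanSpace.real_norm_sq_eq, Fin.sum_univ_two]
  have hρx : ρ ^ 2 < ‖x‖ ^ 2 :=
    pow_lt_pow_left₀ (not_le.1 (mt mem_closedBall_zero_iff.2 hB)) hρ two_ne_zero
  have h0 : ρ ^ 2 ≤ x 0 ∧ x 0 ≤ 1 := ⟨by nlinarith, by nlinarith⟩
  have h1 : |x 1| ≤ √(1 - ρ ^ 2) := Real.abs_le_sqrt (by nlinarith)
  simp only [mem_preimage, mem_Icc, Pi.le_def, Fin.forall_fin_two]
  exact ⟨⟨h0.1, (abs_le.1 h1).1⟩, h0.2, (abs_le.1 h1).2⟩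

theorem one_sub_sq_rpow_le {ρ : ℝ} (h0 : -1 ≤ ρ) (h1 : ρ ≤ 1) :
    (1 - ρ ^ 2) ^ ((3 : ℝ) / 2) ≤ 4 * (1 - ρ) ^ ((3 : ℝ) / 2) := by
  have h2 : (2 : ℝ) ^ ((3 : ℝ) / 2) ≤ 4 := by
    calc (2 : ℝ) ^ ((3 : ℝ) / 2) ≤ 2 ^ (2 : ℝ) :=
          Real.rpow_le_rpow_of_exponent_le one_le_two (by norm_num)
      _ = 4 := by norm_num
  calc (1 - ρ ^ 2) ^ ((3 : ℝ) / 2) ≤ (2 * (1 - ρ)) ^ ((3 : ℝ) / 2) :=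
        Real.rpow_le_rpow (by nlinarith) (by nlinarith) (by norm_num)
    _ = 2 ^ ((3 : ℝ) / 2) * (1 - ρ) ^ ((3 : ℝ) / 2) := Real.mul_rpow zero_le_two (by linarith)
    _ ≤ 4 * (1 - ρ) ^ ((3 : ℝ) / 2) := by gcongr

theorem volume_grainX0_diff_closedBall_le {ρ : ℝ} (h0 : 0 ≤ ρ) (h1 : ρ ≤ 1) :
    volume (grainX0 \ closedBall 0 ρ) ≤ ENNReal.ofReal (2 * (1 - ρ ^ 2) ^ ((3 : ℝ) / 2)) := by
  have ht : 0 ≤ 1 - ρ ^ 2 := by nlinarith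
  have hbox :
      (1 - ρ ^ 2) * (√(1 - ρ ^ 2) - -√(1 - ρ ^ 2)) = 2 * (1 - ρ ^ 2) ^ ((3 : ℝ) / 2) := by
    rw [show (3 : ℝ) / 2 = 1 + 1 / 2 by norm_num, Real.rpow_add' ht (by norm_num),
      Real.rpow_one, ← Real.sqrt_eq_rpow]
    ring
  calc volume (grainX0 \ closedBall 0 ρ)
      ≤ volume (WithLp.ofLp ⁻¹' Icc ![ρ ^ 2, -√(1 - ρ ^ 2)] ![1, √(1 - ρ ^ 2)]) :=
        measure_mono (grainX0_diff_closedBall_subset h0)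
    _ = ENNReal.ofReal (2 * (1 - ρ ^ 2) ^ ((3 : ℝ) / 2)) := by
        rw [(PiLp.volume_preserving_ofLp (Fin 2)).measure_preimage
            measurableSet_Icc.nullMeasurableSet, Real.volume_Icc_pi, Fin.prod_univ_two]
        simp only [Matrix.cons_val_zero, Matrix.cons_val_one]
        rw [← ENNReal.ofReal_mul ht, ← hbox]

theorem muPolarCubed_le_of_le_norm {r : ℝ} (hr : 0 < r) {s : Set (EuclideanSpace ℝ (Fin 2))}
    (hs : MeasurableSet s) (h : ∀ x ∈ s, r ≤ ‖x‖) :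
    muPolarCubed s ≤ ENNReal.ofReal (r ^ 4)⁻¹ * volume s := by
  rw [muPolarCubed, withDensity_apply _ hs]
  calc ∫⁻ x in s, ENNReal.ofReal (‖x‖ ^ 4)⁻¹ ∂volume.restrict _
      ≤ ∫⁻ _ in s, ENNReal.ofReal (r ^ 4)⁻¹ ∂volume.restrict _ :=
        setLIntegral_mono' hs fun x hx =>
          ENNReal.ofReal_le_ofReal (inv_anti₀ (by positivity) (pow_le_pow_left₀ hr.le (h x hx) 4))
    _ ≤ ENNReal.ofReal (r ^ 4)⁻¹ * volume s := by
        rw [setLIntegral_const]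
        gcongr _ * ?_
        exact Measure.restrict_le_self _

theorem muPolarCubed_closedBall_diff_closedBall_ne_top {ρ : ℝ} (hρ : 0 < ρ) :
    muPolarCubed (closedBall 0 1 \ closedBall 0 ρ) ≠ ⊤ := by
  refine ne_top_of_le_ne_top ?_ (muPolarCubed_le_of_le_norm hρ
    (measurableSet_closedBall.diff measurableSet_closedBall) fun x hx => ?_)
  · exact ENNReal.mul_ne_top ENNReal.ofReal_ne_top
      (measure_ne_top_of_subset sdiff_subset measure_closedBall_lt_top.ne)
  · exact (not_le.1 (mt mem_closedBall_zero_iff.2 hx.2)).le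

theorem muPolarCubed_grainX0_diff_closedBall_le {ρ : ℝ} (h0 : 0 < ρ) (h1 : ρ ≤ 1) :
    muPolarCubed (grainX0 \ closedBall 0 ρ) ≤
      ENNReal.ofReal (8 / ρ ^ 4 * (1 - ρ) ^ ((3 : ℝ) / 2)) := by
  have hbound := one_sub_sq_rpow_le (by linarith) h1
  calc muPolarCubed (grainX0 \ closedBall 0 ρ)
      ≤ ENNReal.ofReal (ρ ^ 4)⁻¹ * volume (grainX0 \ closedBall 0 ρ) :=
        muPolarCubed_le_of_le_norm h0 (measurableSet_closedBall.diff measurableSet_closedBall)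
          fun x hx => (not_le.1 (mt mem_closedBall_zero_iff.2 hx.2)).le
    _ ≤ ENNReal.ofReal (ρ ^ 4)⁻¹ * ENNReal.ofReal (2 * (1 - ρ ^ 2) ^ ((3 : ℝ) / 2)) := by
        gcongr; exact volume_grainX0_diff_closedBall_le h0.le h1
    _ = ENNReal.ofReal ((ρ ^ 4)⁻¹ * (2 * (1 - ρ ^ 2) ^ ((3 : ℝ) / 2))) :=
        (ENNReal.ofReal_mul (by positivity)).symm
    _ ≤ ENNReal.ofReal (8 / ρ ^ 4 * (1 - ρ) ^ ((3 : ℝ) / 2)) := by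
        refine ENNReal.ofReal_le_ofReal ?_
        calc (ρ ^ 4)⁻¹ * (2 * (1 - ρ ^ 2) ^ ((3 : ℝ) / 2))
            ≤ (ρ ^ 4)⁻¹ * (2 * (4 * (1 - ρ) ^ ((3 : ℝ) / 2))) := by gcongr
          _ = 8 / ρ ^ 4 * (1 - ρ) ^ ((3 : ℝ) / 2) := by ring

theorem mu_defect_of_extra_grain_bound :
    ∃ Cst : ℝ, 0 < Cst ∧ ∀ ρ : ℝ, 1 / 2 ≤ ρ → ρ < 1 →
      ∀ K : Set (EuclideanSpace ℝ (Fin 2)), IsCompact K → Convex ℝ K →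
        (0 : EuclideanSpace ℝ (Fin 2)) ∈ interior K →
        K ⊆ closedBall 0 1 → closedBall 0 ρ ⊆ K →
        muPolarCubed (closedBall 0 1 \ K) -
            muPolarCubed (closedBall 0 1 \ (K ∪ grainX0)) = muPolarCubed (grainX0 \ K) ∧
        muPolarCubed (grainX0 \ K) ≤ muPolarCubed (grainX0 \ closedBall 0 ρ) ∧
        muPolarCubed (grainX0 \ closedBall 0 ρ)
          ≤ ENNReal.ofReal (Cst * (1 - ρ) ^ ((3 : ℝ) / 2)) := by
  refine ⟨128, by norm_num, fun ρ hρ hρ1 K _ _ _ _ hρK => ⟨?_, ?_, ?_⟩⟩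
  · refine measure_diff_sub_measure_diff_union _ measurableSet_closedBall grainX0_subset_closedBall
      (measure_ne_top_of_subset ?_ (muPolarCubed_closedBall_diff_closedBall_ne_top (by linarith)))
    exact sdiff_subset_sdiff_right (subset_union_of_subset_left hρK _)
  · exact measure_mono (sdiff_subset_sdiff_right hρK)
  · refine (muPolarCubed_grainX0_diff_closedBall_le (by linarith) hρ1.le).trans ?_
    have h16 : (1 / 2 : ℝ) ^ 4 ≤ ρ ^ 4 := pow_le_pow_left₀ (by norm_num) hρ 4
    gcongr ENNReal.ofReal (?_ * _)
    rw [div_le_iff₀ (by positivity)]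
    linarith
end

section
/- Let D₁, D₂, D₃, D₄ be the open unit disks centered at (1,0), (−1,0), (0,1), (0,−1), let ℱ = D₁ ∪ D₂ ∪ D₃ ∪ D₄, and let α > 1. Suppose S ⊂ ℝ² \ {0} is a locally finite set of points intersecting each of the four connected components of the set of points of αℱ belonging to exactly two of the disks αD_i. Then the convex polygon ⋂_{x ∈ S} H(x), where H(x) = {y : ⟨y − x, x⟩ ≤ 0}, is bounded, and the number of its edges is at most the number of points of S ∩ αℱ. -/
/-!
A point `z` lies in the disk `α D_i` exactly when `‖z‖² < 2α⟪z, c_i⟫`. The two-fold region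
`α • I2` is the union of the four open lenses `α D_i ∩ α D_j` (one disk of each opposite pair);
these are relatively clopen in it, so every lens contains a point of `S`. Given `y`, pick the
lens of its quadrant and a point `s` of `S` there: then `‖s‖² (|y₀| + |y₁|) ≤ 2α⟪y, s⟫`, so
`y ∈ H(s)` forces `|y₀| + |y₁| ≤ 2α`. This bounds the cell. A point `x ∉ αℱ` satisfies
`2α|x_k| ≤ ‖x‖²` for both coordinates, hence `⟪y, x⟫ ≤ ‖x‖²` whenever `|y₀| + |y₁| ≤ 2α`:
`H(x)` contains the intersection of the other half-planes (one of which is `H(s)`, `s ∈ αℱ`).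
-/

open RealInnerProductSpace Metric Pointwise

theorem exists_mem_biInter_diff_singleton_notMem {ι X : Type*} {A : ι → Set X} {S : Set ι}
    {x : ι} (h : ⋂ i ∈ S \ {x}, A i ≠ ⋂ i ∈ S, A i) : ∃ y ∈ ⋂ i ∈ S \ {x}, A i, y ∉ A x := by
  contrapose! h
  refine (Set.biInter_mono Set.sdiff_subset fun _ _ => subset_rfl).antisymm' ?_
  refine fun y hy => Set.mem_iInter₂.2 fun i hi => ?_
  obtain rfl | hix := eq_or_ne i x
  · exact h y hy
  · exact Set.mem_iInter₂.1 hy i ⟨hi, hix⟩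

theorem ncard_setOf_eq_two_iff {P : Fin 4 → Prop} (h01 : ¬(P 0 ∧ P 1)) (h23 : ¬(P 2 ∧ P 3)) :
    {i | P i}.ncard = 2 ↔ (P 0 ∨ P 1) ∧ (P 2 ∨ P 3) := by
  classical
  rw [Set.ncard_eq_toFinset_card', Set.toFinset_ofPred, Finset.card_filter, Fin.sum_univ_four]
  by_cases P 0 <;> by_cases P 1 <;> by_cases P 2 <;> by_cases P 3 <;> simp_all

theorem connectedComponentIn_subset_inter {X : Type*} [TopologicalSpace X] {T A A' B B' : Set X}
    (hA : IsOpen A) (hA' : IsOpen A') (hB : IsOpen B) (hB' : IsOpen B')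
    (hAA' : Disjoint A A') (hBB' : Disjoint B B') (hT : T ⊆ (A ∪ A') ∩ (B ∪ B'))
    {z : X} (hzT : z ∈ T) (hzA : z ∈ A) (hzB : z ∈ B) :
    connectedComponentIn T z ⊆ A ∩ B := by
  refine isPreconnected_connectedComponentIn.subset_left_of_subset_union (hA.inter hB)
    (hA'.union hB') ?_ ((connectedComponentIn_subset T z).trans fun y hy => ?_)
    ⟨z, mem_connectedComponentIn hzT, hzA, hzB⟩
  · exact Set.disjoint_left.2 fun y hyAB hy => hy.elim (hAA'.notMem_of_mem_left hyAB.1)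
      (hBB'.notMem_of_mem_left hyAB.2)
  · obtain ⟨hyA | hyA', hyB | hyB'⟩ := hT hy
    exacts [Or.inl ⟨hyA, hyB⟩, Or.inr (Or.inr hyB'), Or.inr (Or.inl hyA'), Or.inr (Or.inl hyA')]

theorem EuclideanSpace.inner_le_sum_abs_mul {ι : Type*} [Fintype ι] {x y : EuclideanSpace ℝ ι}
    {M : ℝ} (hM : ∀ i, |x i| ≤ M) : ⟪y, x⟫ ≤ (∑ i, |y i|) * M := by
  rw [PiLp.inner_apply, Finset.sum_mul]
  refine Finset.sum_le_sum fun i _ => ?_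
  calc ⟪y i, x i⟫ ≤ |y i| * |x i| := by
        rw [Real.inner_apply, ← abs_mul]; exact le_abs_self _
    _ ≤ |y i| * M := by gcongr; exact hM i

theorem EuclideanSpace.norm_le_sum_abs {ι : Type*} [Fintype ι] (y : EuclideanSpace ℝ ι) :
    ‖y‖ ≤ ∑ i, |y i| := by
  rw [EuclideanSpace.norm_eq, Real.sqrt_le_left (Finset.sum_nonneg fun i _ => abs_nonneg _)]
  simpa only [Real.norm_eq_abs] using
    Finset.sum_sq_le_sq_sum_of_nonneg fun i _ => abs_nonneg (y i)

theorem norm_eq_one_of_mem_pair {G : Type*} [SeminormedAddGroup G] {u w : G}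
    (hu : u ∈ ({w, -w} : Set G)) (hw : ‖w‖ = 1) : ‖u‖ = 1 := by
  rcases hu with rfl | rfl <;> simp [hw]

theorem union_neg_eq_of_mem_pair {G β : Type*} [InvolutiveNeg G] (f : G → Set β) {u w : G}
    (h : u ∈ ({w, -w} : Set G)) : f u ∪ f (-u) = f w ∪ f (-w) := by
  rcases h with rfl | rfl
  · rfl
  · rw [neg_neg, Set.union_comm]

section InnerProductSpace

variable {E : Type*} [NormedAddCommGroup E] [InnerProductSpace ℝ E] {α : ℝ} {u v x : E}

theorem mem_smul_ball_iff (hα : 0 < α) (hu : ‖u‖ = 1) {z : E} :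
    z ∈ α • ball u 1 ↔ ‖z‖ ^ 2 < 2 * α * ⟪z, u⟫ := by
  rw [_root_.smul_ball hα.ne', mem_ball, dist_eq_norm, Real.norm_of_nonneg hα.le, mul_one,
    ← sq_lt_sq₀ (norm_nonneg _) hα.le, norm_sub_sq_real, real_inner_smul_right, norm_smul,
    Real.norm_of_nonneg hα.le, hu]
  constructor <;> intro h <;> linarith

theorem add_le_of_inner_sub_nonpos {a b : ℝ} {s : E} (hα : 0 ≤ α) (ha : 0 ≤ a)
    (hb : 0 ≤ b) (hu : ‖s‖ ^ 2 < 2 * α * ⟪s, u⟫) (hv : ‖s‖ ^ 2 < 2 * α * ⟪s, v⟫)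
    (hs : ⟪a • u + b • v - s, s⟫ ≤ 0) : a + b ≤ 2 * α := by
  have hs0 : 0 < ‖s‖ ^ 2 := by
    refine (sq_nonneg _).lt_of_ne fun h => ?_
    rw [eq_comm, sq_eq_zero_iff, norm_eq_zero] at h
    simp [h] at hu
  rw [inner_sub_left, inner_add_left, real_inner_smul_left, real_inner_smul_left,
    real_inner_self_eq_norm_sq, real_inner_comm s u, real_inner_comm s v] at hs
  refine le_of_mul_le_mul_right ?_ hs0
  calc (a + b) * ‖s‖ ^ 2 ≤ 2 * α * (a * ⟪s, u⟫ + b * ⟪s, v⟫) := by nlinarith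
    _ ≤ 2 * α * ‖s‖ ^ 2 := by gcongr; linarith

theorem disjoint_smul_ball_neg (hα : 0 < α) (hu : ‖u‖ = 1) :
    Disjoint (α • ball u 1) (α • ball (-u) 1) := by
  refine Set.disjoint_left.2 fun z h₁ h₂ => ?_
  rw [mem_smul_ball_iff hα hu] at h₁
  rw [mem_smul_ball_iff hα (by rwa [norm_neg]), inner_neg_right] at h₂
  nlinarith [sq_nonneg ‖z‖]

theorem abs_inner_le_of_notMem_smul_ball (hα : 0 < α) (hu : ‖u‖ = 1)
    (h₁ : x ∉ α • ball u 1) (h₂ : x ∉ α • ball (-u) 1) : 2 * α * |⟪x, u⟫| ≤ ‖x‖ ^ 2 := by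
  rw [mem_smul_ball_iff hα hu, not_lt] at h₁
  rw [mem_smul_ball_iff hα (by rwa [norm_neg]), inner_neg_right, not_lt] at h₂
  rcases abs_cases ⟪x, u⟫ with ⟨h, -⟩ | ⟨h, -⟩ <;> rw [h] <;> linarith

theorem half_smul_add_mem_smul_ball (hα : 0 < α) (hu : ‖u‖ = 1) (hv : ‖v‖ = 1)
    (huv : ⟪u, v⟫ = 0) : (α / 2) • (u + v) ∈ α • ball u 1 := by
  rw [mem_smul_ball_iff hα hu, norm_smul, mul_pow, ← real_inner_self_eq_norm_sq (u + v),
    real_inner_smul_left, inner_add_add_self, inner_add_left, real_inner_self_eq_norm_sq,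
    real_inner_self_eq_norm_sq, real_inner_comm u v, huv, hu, hv,
    Real.norm_of_nonneg (by positivity)]
  nlinarith

theorem exists_abs_smul_eq (t : ℝ) (w : E) : ∃ w' ∈ ({w, -w} : Set E), |t| • w' = t • w := by
  rcases abs_cases t with ⟨h, -⟩ | ⟨h, -⟩
  · exact ⟨w, Or.inl rfl, by rw [h]⟩
  · exact ⟨-w, Or.inr rfl, by rw [h, neg_smul_neg]⟩

end InnerProductSpace

section Plane

local notation "ℝ²" => EuclideanSpace ℝ (Fin 2)

local notation "e₀" => EuclideanSpace.single (0 : Fin 2) (1 : ℝ)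

local notation "e₁" => EuclideanSpace.single (1 : Fin 2) (1 : ℝ)

noncomputable def axisDir : Fin 4 → ℝ² := ![e₀, -e₀, e₁, -e₁]

def twoFold : Set ℝ² := {y | {i : Fin 4 | y ∈ ball (axisDir i) 1}.ncard = 2}

variable {α : ℝ}

theorem smul_twoFold (hα : 0 < α) :
    α • twoFold = (α • ball e₀ 1 ∪ α • ball (-e₀) 1) ∩ (α • ball e₁ 1 ∪ α • ball (-e₁) 1) := by
  ext z
  have h₀ := disjoint_smul_ball_neg (u := e₀) hα (by simp)
  have h₁ := disjoint_smul_ball_neg (u := e₁) hα (by simp)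
  simp only [twoFold, Set.mem_smul_set_iff_inv_smul_mem₀ hα.ne', Set.mem_ofPred_eq,
    Set.mem_inter_iff, Set.mem_union]
  simp only [← Set.mem_smul_set_iff_inv_smul_mem₀ hα.ne']
  exact ncard_setOf_eq_two_iff (fun h => Set.disjoint_left.1 h₀ h.1 h.2)
    (fun h => Set.disjoint_left.1 h₁ h.1 h.2)

theorem exists_mem_smul_ball_inter {S : Set ℝ²}
    (hα : 0 < α) (hhit : ∀ y ∈ α • twoFold, (S ∩ connectedComponentIn (α • twoFold) y).Nonempty)
    {u v : ℝ²} (hu : u ∈ ({e₀, -e₀} : Set ℝ²)) (hv : v ∈ ({e₁, -e₁} : Set ℝ²)) :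
    ∃ s ∈ S, s ∈ α • ball u 1 ∩ α • ball v 1 := by
  have hnu := norm_eq_one_of_mem_pair hu (by simp)
  have hnv := norm_eq_one_of_mem_pair hv (by simp)
  have huv : ⟪u, v⟫ = 0 := by
    rcases hu with rfl | rfl <;> rcases hv with rfl | rfl <;>
      simp [EuclideanSpace.inner_single_left]
  have hT : α • twoFold =
      (α • ball u 1 ∪ α • ball (-u) 1) ∩ (α • ball v 1 ∪ α • ball (-v) 1) := by
    rw [smul_twoFold hα]
    exact congr_arg₂ (· ∩ ·) (union_neg_eq_of_mem_pair (fun w => α • ball w 1) hu).symm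
      (union_neg_eq_of_mem_pair (fun w => α • ball w 1) hv).symm
  have hopen : ∀ w : ℝ², IsOpen (α • ball w 1) := fun w => isOpen_ball.smul₀ hα.ne'
  have hwu := half_smul_add_mem_smul_ball hα hnu hnv huv
  have hwv := half_smul_add_mem_smul_ball hα hnv hnu (by rwa [real_inner_comm])
  rw [add_comm] at hwv
  have hw : (α / 2) • (u + v) ∈ α • twoFold := by
    rw [hT]
    exact ⟨Or.inl hwu, Or.inl hwv⟩
  obtain ⟨s, hs, hsw⟩ := hhit _ hw
  exact ⟨s, hs, connectedComponentIn_subset_inter (hopen u) (hopen _) (hopen v) (hopen _)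
    (disjoint_smul_ball_neg hα hnu) (disjoint_smul_ball_neg hα hnv) hT.subset hw hwu hwv hsw⟩

theorem exists_abs_smul_add_abs_smul_eq (y : ℝ²) :
    ∃ u ∈ ({e₀, -e₀} : Set ℝ²), ∃ v ∈ ({e₁, -e₁} : Set ℝ²), |y 0| • u + |y 1| • v = y := by
  obtain ⟨u, hu, hyu⟩ := exists_abs_smul_eq (y 0) e₀
  obtain ⟨v, hv, hyv⟩ := exists_abs_smul_eq (y 1) e₁
  refine ⟨u, hu, v, hv, ?_⟩
  rw [hyu, hyv]
  ext k
  fin_cases k <;> simp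

theorem exists_mem_smul_disks_sum_abs_le {S : Set ℝ²} (hα : 0 < α)
    (hhit : ∀ y ∈ α • twoFold, (S ∩ connectedComponentIn (α • twoFold) y).Nonempty) (y : ℝ²) :
    ∃ s ∈ S, s ∈ α • ⋃ i, ball (axisDir i) 1 ∧ (⟪y - s, s⟫ ≤ 0 → ∑ k, |y k| ≤ 2 * α) := by
  obtain ⟨u, hu, v, hv, hy⟩ := exists_abs_smul_add_abs_smul_eq y
  obtain ⟨s, hs, hsu, hsv⟩ := exists_mem_smul_ball_inter hα hhit hu hv
  have hsF : s ∈ α • ⋃ i, ball (axisDir i) 1 := by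
    rw [Set.smul_set_iUnion, Set.mem_iUnion]
    rcases hu with rfl | rfl
    exacts [⟨0, hsu⟩, ⟨1, hsu⟩]
  refine ⟨s, hs, hsF, fun hys => ?_⟩
  rw [Fin.sum_univ_two]
  exact add_le_of_inner_sub_nonpos hα.le (abs_nonneg _) (abs_nonneg _)
    ((mem_smul_ball_iff hα (norm_eq_one_of_mem_pair hu (by simp))).1 hsu)
    ((mem_smul_ball_iff hα (norm_eq_one_of_mem_pair hv (by simp))).1 hsv) (by rwa [hy])

theorem inner_sub_nonpos_of_notMem_smul_disks (hα : 0 < α) {x y : ℝ²}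
    (hx : x ∉ α • ⋃ i, ball (axisDir i) 1) (hy : ∑ k, |y k| ≤ 2 * α) : ⟪y - x, x⟫ ≤ 0 := by
  rw [Set.smul_set_iUnion, Set.mem_iUnion, not_exists] at hx
  have hxk : ∀ k, |x k| ≤ ‖x‖ ^ 2 / (2 * α) := by
    intro k
    rw [le_div_iff₀ (by positivity), mul_comm]
    fin_cases k
    · simpa [EuclideanSpace.inner_single_right] using
        abs_inner_le_of_notMem_smul_ball (u := e₀) hα (by simp) (hx 0) (hx 1)
    · simpa [EuclideanSpace.inner_single_right] using
        abs_inner_le_of_notMem_smul_ball (u := e₁) hα (by simp) (hx 2) (hx 3)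
  rw [inner_sub_left, real_inner_self_eq_norm_sq, sub_nonpos]
  calc ⟪y, x⟫ ≤ (∑ k, |y k|) * (‖x‖ ^ 2 / (2 * α)) := EuclideanSpace.inner_le_sum_abs_mul hxk
    _ ≤ 2 * α * (‖x‖ ^ 2 / (2 * α)) := by gcongr
    _ = ‖x‖ ^ 2 := by field_simp

end Plane

theorem zuyev_edge_bound_general
    (α : ℝ) (hα : 1 < α)
    (S : Set (EuclideanSpace ℝ (Fin 2)))
    (c : Fin 4 → EuclideanSpace ℝ (Fin 2))
    (hc0 : c 0 = EuclideanSpace.single 0 1) (hc1 : c 1 = EuclideanSpace.single 0 (-1))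
    (hc2 : c 2 = EuclideanSpace.single 1 1) (hc3 : c 3 = EuclideanSpace.single 1 (-1))
    (F : Set (EuclideanSpace ℝ (Fin 2))) (hF : F = ⋃ i, ball (c i) 1)
    (I2 : Set (EuclideanSpace ℝ (Fin 2)))
    (hI2 : I2 = {y | {i : Fin 4 | y ∈ ball (c i) 1}.ncard = 2})
    (hhit : ∀ y ∈ α • I2, (S ∩ connectedComponentIn (α • I2) y).Nonempty)
    (H : EuclideanSpace ℝ (Fin 2) → Set (EuclideanSpace ℝ (Fin 2)))
    (hH : ∀ x, H x = {y | ⟪y - x, x⟫ ≤ 0}) :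
    Bornology.IsBounded (⋂ x ∈ S, H x) ∧
    ∀ x ∈ S, (⋂ x' ∈ S \ {x}, H x') ≠ (⋂ x' ∈ S, H x') → x ∈ α • F := by
  obtain rfl : c = axisDir := by
    funext i
    fin_cases i <;> simp [axisDir, hc0, hc1, hc2, hc3, PiLp.single_neg]
  obtain rfl : H = fun x => {y | ⟪y - x, x⟫ ≤ 0} := funext hH
  subst hF hI2
  have hα₀ : 0 < α := zero_lt_one.trans hα
  refine ⟨(isBounded_closedBall (x := 0) (r := 2 * α)).subset fun y hy => ?_,
    fun x _ hne => ?_⟩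
  · obtain ⟨s, hs, -, hsy⟩ := exists_mem_smul_disks_sum_abs_le hα₀ hhit y
    rw [mem_closedBall_zero_iff]
    exact (EuclideanSpace.norm_le_sum_abs y).trans (hsy (Set.mem_iInter₂.1 hy s hs))
  · obtain ⟨y, hy, hyx⟩ := exists_mem_biInter_diff_singleton_notMem hne
    by_contra hxF
    obtain ⟨s, hs, hsF, hsy⟩ := exists_mem_smul_disks_sum_abs_le hα₀ hhit y
    have hsx : s ≠ x := by rintro rfl; exact hxF hsF
    exact hyx (inner_sub_nonpos_of_notMem_smul_disks hα₀ hxF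
      (hsy (Set.mem_iInter₂.1 hy s ⟨hs, hsx⟩)))

theorem zuyev_edge_bound
    (α : ℝ) (hα : 1 < α)
    (S : Set (EuclideanSpace ℝ (Fin 2))) (hS0 : (0 : EuclideanSpace ℝ (Fin 2)) ∉ S)
    (hloc : ∀ x : EuclideanSpace ℝ (Fin 2), ∃ U ∈ nhds x, (S ∩ U).Finite)
    (c : Fin 4 → EuclideanSpace ℝ (Fin 2))
    (hc0 : c 0 = EuclideanSpace.single 0 1) (hc1 : c 1 = EuclideanSpace.single 0 (-1))
    (hc2 : c 2 = EuclideanSpace.single 1 1) (hc3 : c 3 = EuclideanSpace.single 1 (-1))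
    (F : Set (EuclideanSpace ℝ (Fin 2))) (hF : F = ⋃ i, ball (c i) 1)
    (I2 : Set (EuclideanSpace ℝ (Fin 2)))
    (hI2 : I2 = {y | {i : Fin 4 | y ∈ ball (c i) 1}.ncard = 2})
    (hhit : ∀ y ∈ α • I2, (S ∩ connectedComponentIn (α • I2) y).Nonempty)
    (H : EuclideanSpace ℝ (Fin 2) → Set (EuclideanSpace ℝ (Fin 2)))
    (hH : ∀ x, H x = {y | ⟪y - x, x⟫ ≤ 0}) :
    Bornology.IsBounded (⋂ x ∈ S, H x) ∧
    ∀ x ∈ S, (⋂ x' ∈ S \ {x}, H x') ≠ (⋂ x' ∈ S, H x') → x ∈ α • F :=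
  zuyev_edge_bound_general α hα S c hc0 hc1 hc2 hc3 F hF I2 hI2 hhit H hH
end
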